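/- Let ι be a finite index set, let h : ι → ℝ satisfy h j > 0 for all j, let c > 0 and P be real constants. Then the set {(μ, b) ∈ (ι → ℝ) × (ι → ℝ) : (∀ j, 0 < μ j ∧ 0 ≤ b j) ∧ ∑_{j ∈ ι} (μ j / h j) · (exp(c · b j / μ j) − 1) ≤ P} is a convex subset of (ι → ℝ) × (ι → ℝ). -/

import Mathlib

/-! Each summand is `(1 / h j)` times the perspective `μ · g(b / μ)` of the convex function
`g t = exp (c t) - 1`, and perspectives of convex functions are jointly convex on `μ > 0`.
So the constraint function is convex on the convex set of admissible `(μ, b)`, and the constraint set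
is one of its sublevel sets. -/

open Set Real

theorem ConvexOn.perspective {E : Type*} [AddCommGroup E] [Module ℝ E] {g : E → ℝ}
    (hg : ConvexOn ℝ univ g) :
    ConvexOn ℝ (Ioi 0 ×ˢ univ) fun p : ℝ × E => p.1 * g (p.1⁻¹ • p.2) := by
  refine ⟨(convex_Ioi 0).prod convex_univ, ?_⟩
  rintro ⟨x₁, y₁⟩ ⟨hx₁, -⟩ ⟨x₂, y₂⟩ ⟨hx₂, -⟩ a b ha hb hab
  simp only [mem_Ioi] at hx₁ hx₂
  set s := a * x₁ + b * x₂
  have hs : 0 < s := convex_Ioi (0 : ℝ) hx₁ hx₂ ha hb hab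
  -- the slope of the mean point is the mean of the slopes with weights `a x₁ / s` and `b x₂ / s`
  have hmean : s⁻¹ • (a • y₁ + b • y₂) =
      (a * x₁ / s) • (x₁⁻¹ • y₁) + (b * x₂ / s) • (x₂⁻¹ • y₂) := by
    simp only [smul_add, smul_smul]
    congr 2 <;> field_simp
  have hjensen := hg.2 (mem_univ (x₁⁻¹ • y₁)) (mem_univ (x₂⁻¹ • y₂))
    (by positivity : 0 ≤ a * x₁ / s) (by positivity : 0 ≤ b * x₂ / s)
    (by rw [← add_div, div_self hs.ne'])
  simp only [Prod.fst_add, Prod.snd_add, Prod.smul_fst, Prod.smul_snd, smul_eq_mul]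
  rw [← hmean] at hjensen
  calc s * g (s⁻¹ • (a • y₁ + b • y₂))
      ≤ s * ((a * x₁ / s) * g (x₁⁻¹ • y₁) + (b * x₂ / s) * g (x₂⁻¹ • y₂)) :=
        mul_le_mul_of_nonneg_left hjensen hs.le
    _ = a * (x₁ * g (x₁⁻¹ • y₁)) + b * (x₂ * g (x₂⁻¹ • y₂)) := by field_simp

theorem convexOn_finset_sum {𝕜 E β ι : Type*} [Semiring 𝕜] [PartialOrder 𝕜] [AddCommMonoid E]
    [AddCommMonoid β] [PartialOrder β] [IsOrderedAddMonoid β] [SMul 𝕜 E] [Module 𝕜 β]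
    {s : Set E} (hs : Convex 𝕜 s) {t : Finset ι} {f : ι → E → β}
    (hf : ∀ i ∈ t, ConvexOn 𝕜 s (f i)) : ConvexOn 𝕜 s fun x => ∑ i ∈ t, f i x := by
  have := Finset.sum_induction f (ConvexOn 𝕜 s) (fun _ _ => ConvexOn.add) (convexOn_const 0 hs) hf
  rwa [Finset.sum_fn] at this

theorem convexOn_mul_exp_mul_div_sub_one (c : ℝ) :
    ConvexOn ℝ (Ioi 0 ×ˢ univ) fun p : ℝ × ℝ => p.1 * (exp (c * p.2 / p.1) - 1) := by
  have hg : ConvexOn ℝ univ fun t => exp (c * t) - 1 :=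
    (convexOn_exp.comp_linearMap (LinearMap.mul ℝ ℝ c)).add_const (-1) |>.congr
      fun t _ => by simp [sub_eq_add_neg]
  refine hg.perspective.congr fun p _ => ?_
  simp only [smul_eq_mul, mul_div_assoc, inv_mul_eq_div]

theorem transformed_power_constraint_convex_general
    {ι : Type*} [Fintype ι] (h : ι → ℝ) (hh : ∀ j, 0 < h j) (c P : ℝ) :
    Convex ℝ {p : (ι → ℝ) × (ι → ℝ) |
      (∀ j, 0 < p.1 j ∧ 0 ≤ p.2 j) ∧
      ∑ j, (p.1 j / h j) * (Real.exp (c * p.2 j / p.1 j) - 1) ≤ P} := by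
  let coords (j : ι) : (ι → ℝ) × (ι → ℝ) →ₗ[ℝ] ℝ × ℝ :=
    (LinearMap.proj j).prodMap (LinearMap.proj j)
  let S := {p : (ι → ℝ) × (ι → ℝ) | ∀ j, 0 < p.1 j ∧ 0 ≤ p.2 j}
  have hS : Convex ℝ S := fun p hp q hq a b ha hb hab j =>
    ⟨convex_Ioi (0 : ℝ) (hp j).1 (hq j).1 ha hb hab,
      convex_Ici (0 : ℝ) (hp j).2 (hq j).2 ha hb hab⟩
  have hsummand (j : ι) :
      ConvexOn ℝ S fun p => (p.1 j / h j) * (exp (c * p.2 j / p.1 j) - 1) := by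
    have := ((convexOn_mul_exp_mul_div_sub_one c).comp_linearMap (coords j)).smul
      (inv_nonneg.2 (hh j).le)
    refine (this.subset (fun p hp => ?_) hS).congr fun p _ => ?_
    · exact ⟨(hp j).1, mem_univ _⟩
    · simp [coords, div_eq_inv_mul, mul_assoc]
  exact (convexOn_finset_sum hS (t := Finset.univ) fun j _ => hsummand j).convex_le P

theorem transformed_power_constraint_convex
    {ι : Type*} [Fintype ι] (h : ι → ℝ) (hh : ∀ j, 0 < h j) (c P : ℝ) (hc : 0 < c) :
    Convex ℝ {p : (ι → ℝ) × (ι → ℝ) |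
      (∀ j, 0 < p.1 j ∧ 0 ≤ p.2 j) ∧
      ∑ j, (p.1 j / h j) * (Real.exp (c * p.2 j / p.1 j) - 1) ≤ P} :=
  transformed_power_constraint_convex_general h hh c P
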